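/- The Nodal-Lefty regulatory function is Lipschitz in its first argument uniformly in the second: for all y_l ≥ 0 and all t₁, t₂ ≥ 0, |H(t₁, y_l) − H(t₂, y_l)| ≤ (n_n/k_n) |t₁ − t₂|. -/

import Mathlib

/-! The Lefty term only enlarges the Hill threshold `K = k_n (1 + (y_l/k_l)^{n_l}) ≥ k_n`, so it
suffices that `x ↦ x^n / (x^n + K^n)` is `n/K`-Lipschitz on `[0, ∞)`. Its derivative is
`n x^{n-1} K^n / (x^n + K^n)^2`, and with `m = max x K` we have `x^{n-1} K ≤ m^n ≤ x^n + K^n` and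
`K^n ≤ x^n + K^n`, so the derivative is at most `n/K`; the mean value inequality concludes. -/

open Real Set

noncomputable def hill (n K x : ℝ) : ℝ := x ^ n / (x ^ n + K ^ n)

section Hill

variable {n K : ℝ}

lemma rpow_sub_one_mul_le_rpow_add_rpow (hn : 1 ≤ n) (hK : 0 < K) {x : ℝ} (hx : 0 ≤ x) :
    x ^ (n - 1) * K ≤ x ^ n + K ^ n := by
  have hm : 0 < max x K := lt_max_of_lt_right hK
  calc x ^ (n - 1) * K ≤ max x K ^ (n - 1) * max x K :=
        mul_le_mul (rpow_le_rpow hx (le_max_left x K) (by linarith)) (le_max_right x K) hK.le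
          (rpow_nonneg hm.le _)
    _ = max x K ^ n := by rw [← rpow_add_one hm.ne', sub_add_cancel]
    _ ≤ x ^ n + K ^ n := by
        rcases max_choice x K with h | h <;> rw [h]
        · linarith [rpow_nonneg hK.le n]
        · linarith [rpow_nonneg hx n]

lemma hasDerivAt_hill (hn : 1 ≤ n) (hK : 0 < K) {x : ℝ} (hx : 0 ≤ x) :
    HasDerivAt (hill n K) (n * x ^ (n - 1) * K ^ n / (x ^ n + K ^ n) ^ 2) x := by
  have hpow : HasDerivAt (fun y : ℝ => y ^ n) (n * x ^ (n - 1)) x :=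
    hasDerivAt_rpow_const (Or.inr hn)
  have hden : x ^ n + K ^ n ≠ 0 := by positivity
  exact (hpow.div (hpow.add_const (K ^ n)) hden).congr_deriv (by ring)

lemma hill_deriv_le (hn : 1 ≤ n) (hK : 0 < K) {x : ℝ} (hx : 0 ≤ x) :
    n * x ^ (n - 1) * K ^ n / (x ^ n + K ^ n) ^ 2 ≤ n / K := by
  rw [div_le_div_iff₀ (by positivity) hK]
  calc n * x ^ (n - 1) * K ^ n * K = n * ((x ^ (n - 1) * K) * K ^ n) := by ring
    _ ≤ n * ((x ^ n + K ^ n) * (x ^ n + K ^ n)) := by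
        gcongr
        · exact rpow_sub_one_mul_le_rpow_add_rpow hn hK hx
        · linarith [rpow_nonneg hx n]
    _ = n * (x ^ n + K ^ n) ^ 2 := by ring

lemma abs_hill_sub_le (hn : 1 ≤ n) (hK : 0 < K) {x y : ℝ} (hx : 0 ≤ x) (hy : 0 ≤ y) :
    |hill n K x - hill n K y| ≤ n / K * |x - y| := by
  have hderiv : ∀ z ∈ Ici (0 : ℝ), HasDerivWithinAt (hill n K)
      (n * z ^ (n - 1) * K ^ n / (z ^ n + K ^ n) ^ 2) (Ici 0) z :=
    fun z hz => (hasDerivAt_hill hn hK hz).hasDerivWithinAt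
  have hbound : ∀ z ∈ Ici (0 : ℝ), ‖n * z ^ (n - 1) * K ^ n / (z ^ n + K ^ n) ^ 2‖ ≤ n / K := by
    intro z hz
    have hz : 0 ≤ z := hz
    rw [norm_of_nonneg (by have := rpow_nonneg hz (n - 1); positivity)]
    exact hill_deriv_le hn hK hz
  simpa only [norm_eq_abs] using
    (convex_Ici (0 : ℝ)).norm_image_sub_le_of_norm_hasDerivWithin_le hderiv hbound hy hx

end Hill

theorem nodal_lefty_lipschitz_first_argument_general
    (nn nl kn kl : ℝ) (hnn : 1 ≤ nn)
    (hkn : 0 < kn) (hkl : 0 < kl)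
    (H : ℝ → ℝ → ℝ)
    (hH : ∀ yn yl, H yn yl =
      yn ^ nn / (yn ^ nn + (kn * (1 + (yl / kl) ^ nl)) ^ nn)) :
    ∀ yl : ℝ, 0 ≤ yl → ∀ t₁ t₂ : ℝ, 0 ≤ t₁ → 0 ≤ t₂ →
      |H t₁ yl - H t₂ yl| ≤ (nn / kn) * |t₁ - t₂| := by
  intro yl hyl t₁ t₂ ht₁ ht₂
  set K := kn * (1 + (yl / kl) ^ nl)
  have hkn_le_K : kn ≤ K := by
    have : 0 ≤ (yl / kl) ^ nl := rpow_nonneg (div_nonneg hyl hkl.le) _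
    nlinarith
  have hK : 0 < K := hkn.trans_le hkn_le_K
  calc |H t₁ yl - H t₂ yl| = |hill nn K t₁ - hill nn K t₂| := by rw [hH, hH]; rfl
    _ ≤ nn / K * |t₁ - t₂| := abs_hill_sub_le hnn hK ht₁ ht₂
    _ ≤ nn / kn * |t₁ - t₂| := by gcongr

/-- The Nodal-Lefty regulatory function is Lipschitz in its first
argument, uniformly in the second, with Lipschitz constant `n_n / k_n`. -/
theorem nodal_lefty_lipschitz_first_argument
    (nn nl kn kl : ℝ) (hnn : 1 ≤ nn) (hnl : 1 ≤ nl)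
    (hkn : 0 < kn) (hkl : 0 < kl)
    (H : ℝ → ℝ → ℝ)
    (hH : ∀ yn yl, H yn yl =
      yn ^ nn / (yn ^ nn + (kn * (1 + (yl / kl) ^ nl)) ^ nn)) :
    ∀ yl : ℝ, 0 ≤ yl → ∀ t₁ t₂ : ℝ, 0 ≤ t₁ → 0 ≤ t₂ →
      |H t₁ yl - H t₂ yl| ≤ (nn / kn) * |t₁ - t₂| :=
  nodal_lefty_lipschitz_first_argument_general nn nl kn kl hnn hkn hkl H hH
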